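/- Let X and Y be path connected Polish spaces with basepoints x ∈ X and y ∈ Y, and let f : X → Y be continuous with f(x) = y. Let f̄ : L_x → L_y denote the continuous map l ↦ f∘l and f_* : π₁(X,x) → π₁(Y,y) the induced homomorphism. Suppose there is a continuous map k : L_y → L_x such that for every loop l ∈ L_y the loop f∘(k(l)) is path-homotopic to l. Then for every subgroup G of π₁(Y,y): the loop set of f_*⁻¹(G) is an analytic subset of L_x if and only if the loop set of G is an analytic subset of L_y. -/

import Mathlib

open CategoryTheory
open scoped Cardinal
open scoped commutatorElement

attribute [local instance] Path.Homotopic.setoid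

/-- The path-homotopy class of a loop `l` based at `x`, as an element of the
fundamental group `π₁(X, x)`. -/
noncomputable def pathClass {X : Type u} [TopologicalSpace X] {x : X} (l : Path x x) :
    FundamentalGroup X x :=
  (⟦l⟧ : Path.Homotopic.Quotient x x)

/-- The loop set of a subgroup `G` of `π₁(Y, y)`: the set of loops at `y` (elements of the
loop space `Path y y`, carrying the compact-open/uniform convergence topology) whose
path-homotopy class lies in `G`. -/
def loopSet {Y : Type u} [TopologicalSpace Y] {y : Y} (G : Subgroup (FundamentalGroup Y y)) :
    Set (Path y y) :=
  {l | pathClass l ∈ G}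

/-- The smallest closed subgroup of `π₁(Y, y)` containing the commutator subgroup,
namely the intersection of all subgroups that contain the commutator subgroup and
whose loop set is closed in the loop space. -/
noncomputable def strongCommutator (Y : Type u) [TopologicalSpace Y] (y : Y) :
    Subgroup (FundamentalGroup Y y) :=
  ⨅ (H : Subgroup (FundamentalGroup Y y))
    (_ : commutator (FundamentalGroup Y y) ≤ H ∧ IsClosed (loopSet H)), H

theorem commutator_le_strongCommutator (Y : Type u) [TopologicalSpace Y] (y : Y) :
    commutator (FundamentalGroup Y y) ≤ strongCommutator Y y :=
  le_iInf fun _ => le_iInf fun h => h.1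

instance strongCommutator_normal (Y : Type u) [TopologicalSpace Y] (y : Y) :
    (strongCommutator Y y).Normal := by
  constructor
  intro g hg a
  have h1 : ⁅a, g⁆ ∈ strongCommutator Y y := by
    apply commutator_le_strongCommutator Y y
    rw [commutator_def]
    exact Subgroup.commutator_mem_commutator (Subgroup.mem_top a) (Subgroup.mem_top g)
  have h2 : a * g * a⁻¹ = ⁅a, g⁆ * g := by group
  rw [h2]; exact Subgroup.mul_mem _ h1 hg

/-- The strong abelianization `ĥ(Y, y)`: the quotient of `π₁(Y, y)` by the smallest
closed subgroup containing the commutator subgroup. -/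
noncomputable abbrev StrongAb (Y : Type u) [TopologicalSpace Y] (y : Y) : Type u :=
  FundamentalGroup Y y ⧸ strongCommutator Y y

/-- Pushing a loop at `x` forward along a continuous map `f` with `f x = y`, giving a
loop at `y`.  (On path-homotopy classes this induces `f⋆ : π₁(X,x) → π₁(Y,y)`.) -/
noncomputable def pathPush {X Y : Type} [TopologicalSpace X] [TopologicalSpace Y]
    {x : X} {y : Y} (f : C(X, Y)) (hf : f x = y) (l : Path x x) : Path y y :=
  (l.map f.continuous).cast hf.symm hf.symm

/-
The loop set of `f⋆⁻¹(G)` is the preimage of the loop set of `G` under the continuous map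
`l ↦ f ∘ l`; conversely, since `f ∘ k(l)` is homotopic to `l`, the loop set of `G` is the preimage
of the loop set of `f⋆⁻¹(G)` under `k`. Loop spaces of Polish spaces are Polish, and continuous
preimages of analytic sets are analytic.
-/

theorem Path.isClosedEmbedding_coe {X : Type*} [TopologicalSpace X] [T2Space X] (a b : X) :
    Topology.IsClosedEmbedding ((↑) : Path a b → C(unitInterval, X)) where
  eq_induced := rfl
  injective _ _ h := Path.ext (congrArg (⇑) h)
  isClosed_range := by
    rw [Path.range_coe]
    exact (isClosed_eq (continuous_eval_const 0) continuous_const).inter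
      (isClosed_eq (continuous_eval_const 1) continuous_const)

instance Path.polishSpace {X : Type*} [TopologicalSpace X] [PolishSpace X] (a b : X) :
    PolishSpace (Path a b) :=
  letI := TopologicalSpace.upgradeIsCompletelyMetrizable X
  (Path.isClosedEmbedding_coe a b).polishSpace

theorem continuous_pathPush {X Y : Type} [TopologicalSpace X] [TopologicalSpace Y]
    {x : X} {y : Y} (f : C(X, Y)) (hf : f x = y) : Continuous (pathPush f hf) :=
  continuous_induced_rng.mpr <|
    (ContinuousMap.continuous_postcomp f).comp continuous_induced_dom

theorem pathClass_eq_of_homotopic {Y : Type u} [TopologicalSpace Y] {y : Y} {l l' : Path y y}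
    (h : Path.Homotopic l l') : pathClass l = pathClass l' :=
  Quotient.sound h

theorem stmt11_general (X Y : Type) [TopologicalSpace X] [PolishSpace X]
    [TopologicalSpace Y] [PolishSpace Y]
    (x : X) (y : Y) (f : C(X, Y)) (hf : f x = y)
    (k : Path y y → Path x x) (hk : Continuous k)
    (hfk : ∀ l : Path y y, Path.Homotopic (pathPush f hf (k l)) l)
    (G : Subgroup (FundamentalGroup Y y)) :
    MeasureTheory.AnalyticSet {l : Path x x | pathClass (pathPush f hf l) ∈ G} ↔
      MeasureTheory.AnalyticSet (loopSet G) := by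
  have hloopSet : loopSet G = k ⁻¹' {l : Path x x | pathClass (pathPush f hf l) ∈ G} := by
    ext l
    simp only [Set.mem_preimage, Set.mem_ofPred_eq, pathClass_eq_of_homotopic (hfk l)]
    rfl
  refine ⟨fun h => hloopSet ▸ h.preimage hk, fun h => ?_⟩
  exact h.preimage (continuous_pathPush f hf)

/-- Let `X`, `Y` be path connected Polish spaces with basepoints `x`, `y`
and `f : X → Y` continuous with `f x = y`.  Suppose there is a continuous `k : L_y → L_x`
such that `f ∘ (k l)` is path-homotopic to `l` for every loop `l` at `y`.  Then for every
subgroup `G ≤ π₁(Y,y)`, the loop set of `f⋆⁻¹(G)` (the loops `l` at `x` with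
`f⋆[l] = [f ∘ l] ∈ G`) is analytic iff the loop set of `G` is analytic. -/
theorem stmt11 (X Y : Type) [TopologicalSpace X] [PolishSpace X] [PathConnectedSpace X]
    [TopologicalSpace Y] [PolishSpace Y] [PathConnectedSpace Y]
    (x : X) (y : Y) (f : C(X, Y)) (hf : f x = y)
    (k : Path y y → Path x x) (hk : Continuous k)
    (hfk : ∀ l : Path y y, Path.Homotopic (pathPush f hf (k l)) l)
    (G : Subgroup (FundamentalGroup Y y)) :
    MeasureTheory.AnalyticSet {l : Path x x | pathClass (pathPush f hf l) ∈ G} ↔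
      MeasureTheory.AnalyticSet (loopSet G) :=
  stmt11_general X Y x y f hf k hk hfk G
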